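/- Let U : ℝⁿ → ℝ be convex and continuously differentiable with minimum value U* attained at s*. If s solves Nesterov's ODE s'' + (3/t)s' + ∇U(s) = 0 on (0,∞), then for all t > 0, U(s(t)) − U* ≤ 2|s(t₀) + (t₀/2)s'(t₀) − s*|²/t² + (t₀²/t²)(U(s(t₀)) − U*) for any 0 < t₀ ≤ t; in particular U(s(t)) − U* = O(1/t²). -/

import Mathlib

/-!
Along a solution of `s'' + (3/t) s' + ∇U(s) = 0`, the energy
`E(t) = t² (U(s t) - U(x⋆)) + 2 ‖s t + (t/2) s' t - x⋆‖²` has derivative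
`2t (U(s t) - U(x⋆) - ⟪∇U(s t), s t - x⋆⟫)`: the ODE makes the derivative of
`s + (t/2) s'` equal to `-(t/2) ∇U(s)`, which cancels the kinetic terms. By convexity this
derivative is nonpositive, so `t² (U(s t) - U(x⋆)) ≤ E(t) ≤ E(t₀)` for `t₀ ≤ t`.
-/

open Set
open scoped RealInnerProductSpace

section

variable {F : Type*} [NormedAddCommGroup F] [NormedSpace ℝ F]

theorem ConvexOn.hasFDerivAt_apply_sub_le {S : Set F} {f : F → ℝ} {f' : F →L[ℝ] ℝ} {x y : F}
    (hf : ConvexOn ℝ S f) (hx : x ∈ S) (hy : y ∈ S) (hf' : HasFDerivAt f f' x) :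
    f' (y - x) ≤ f y - f x := by
  let l : ℝ →ᵃ[ℝ] F := AffineMap.lineMap x y
  have hconv : ConvexOn ℝ (Icc 0 1) (f ∘ l) :=
    (hf.comp_affineMap l).subset (fun θ hθ ↦ hf.1.lineMap_mem hx hy hθ) (convex_Icc 0 1)
  have hderiv : HasDerivAt (f ∘ l) (f' (y - x)) 0 := by
    have hl : HasDerivAt l (y - x) 0 := AffineMap.hasDerivAt_lineMap
    have hf'0 : HasFDerivAt f f' (l 0) := by simpa [l] using hf'
    simpa [l] using hf'0.comp_hasDerivAt 0 hl
  simpa [slope, l] using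
    hconv.le_slope_of_hasDerivAt (left_mem_Icc.2 zero_le_one) (right_mem_Icc.2 zero_le_one)
      zero_lt_one hderiv

theorem hasDerivAt_nesterov_shift {s : ℝ → F} {x g : F} {τ : ℝ} (hτ : τ ≠ 0)
    (hs : DifferentiableAt ℝ s τ) (hs' : DifferentiableAt ℝ (deriv s) τ)
    (hode : deriv (deriv s) τ + (3 / τ) • deriv s τ + g = 0) :
    HasDerivAt (fun t ↦ s t + (t / 2) • deriv s t - x) (-(τ / 2) • g) τ := by
  refine (((hs.hasDerivAt.add (((hasDerivAt_id τ).div_const 2).smul hs'.hasDerivAt)).sub_const x :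
    HasDerivAt (fun t ↦ s t + (t / 2) • deriv s t - x) _ τ)).congr_deriv ?_
  have hg : g = -(deriv (deriv s) τ + (3 / τ) • deriv s τ) := by
    rw [← sub_eq_zero, sub_neg_eq_add, add_comm, hode]
  rw [hg]
  match_scalars <;> field_simp [id] <;> norm_num

end

section

variable {E : Type*} [NormedAddCommGroup E] [InnerProductSpace ℝ E] [CompleteSpace E]

theorem ConvexOn.inner_gradient_sub_le {U : E → ℝ} (hU : ConvexOn ℝ univ U)
    {x : E} (hx : DifferentiableAt ℝ U x) (y : E) :
    ⟪gradient U x, y - x⟫ ≤ U y - U x := by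
  simpa using hU.hasFDerivAt_apply_sub_le (mem_univ x) (mem_univ y)
    hx.hasGradientAt.hasFDerivAt

noncomputable def nesterovEnergy (U : E → ℝ) (x : E) (s : ℝ → E) (t : ℝ) : ℝ :=
  t ^ 2 * (U (s t) - U x) + 2 * ‖s t + (t / 2) • deriv s t - x‖ ^ 2

theorem hasDerivAt_nesterovEnergy {U : E → ℝ} {s : ℝ → E} {x : E} {τ : ℝ} (hτ : τ ≠ 0)
    (hU : DifferentiableAt ℝ U (s τ)) (hs : DifferentiableAt ℝ s τ)
    (hs' : DifferentiableAt ℝ (deriv s) τ)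
    (hode : deriv (deriv s) τ + (3 / τ) • deriv s τ + gradient U (s τ) = 0) :
    HasDerivAt (nesterovEnergy U x s)
      (2 * τ * (U (s τ) - U x - ⟪gradient U (s τ), s τ - x⟫)) τ := by
  set g := gradient U (s τ)
  have hUs : HasDerivAt (fun t ↦ U (s t)) ⟪g, deriv s τ⟫ τ := by
    have h := hU.hasGradientAt.hasFDerivAt.comp_hasDerivAt τ hs.hasDerivAt
    rwa [InnerProductSpace.toDual_apply_apply] at h
  have hv := (hasDerivAt_nesterov_shift (x := x) hτ hs hs' hode).norm_sq
  refine (((hasDerivAt_pow 2 τ).mul (hUs.sub_const (U x))).add (hv.const_mul 2)).congr_deriv ?_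
  have hsplit : s τ + (τ / 2) • deriv s τ - x = (s τ - x) + (τ / 2) • deriv s τ := by abel
  rw [hsplit, inner_smul_right, inner_add_left, inner_smul_left, real_inner_comm g,
    real_inner_comm g]
  simp only [conj_trivial]
  ring

theorem nesterovEnergy_antitoneOn {U : E → ℝ} {s : ℝ → E} (hconv : ConvexOn ℝ univ U)
    (hU : Differentiable ℝ U) (hs : ∀ t ∈ Ioi (0 : ℝ), DifferentiableAt ℝ s t)
    (hs' : ∀ t ∈ Ioi (0 : ℝ), DifferentiableAt ℝ (deriv s) t)
    (hode : ∀ t ∈ Ioi (0 : ℝ), deriv (deriv s) t + (3 / t) • deriv s t + gradient U (s t) = 0)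
    (x : E) : AntitoneOn (nesterovEnergy U x s) (Ioi 0) := by
  have hderiv : ∀ τ ∈ Ioi (0 : ℝ), HasDerivAt (nesterovEnergy U x s)
      (2 * τ * (U (s τ) - U x - ⟪gradient U (s τ), s τ - x⟫)) τ := fun τ hτ ↦
    hasDerivAt_nesterovEnergy (ne_of_gt hτ) (hU _) (hs τ hτ) (hs' τ hτ) (hode τ hτ)
  refine antitoneOn_of_hasDerivWithinAt_nonpos (convex_Ioi 0)
    (f' := fun τ ↦ 2 * τ * (U (s τ) - U x - ⟪gradient U (s τ), s τ - x⟫))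
    (fun τ hτ ↦ (hderiv τ hτ).continuousAt.continuousWithinAt) (fun τ hτ ↦ ?_) (fun τ hτ ↦ ?_)
  · rw [interior_Ioi] at hτ ⊢
    exact (hderiv τ hτ).hasDerivWithinAt
  · rw [interior_Ioi] at hτ
    have hgrad := hconv.inner_gradient_sub_le (hU (s τ)) x
    rw [← neg_sub, inner_neg_right] at hgrad
    exact mul_nonpos_of_nonneg_of_nonpos (by linarith [mem_Ioi.1 hτ]) (by linarith)

end

theorem stmt_6_general (n : ℕ) (U : EuclideanSpace ℝ (Fin n) → ℝ)
    (hU : ContDiff ℝ 1 U) (hUconv : ConvexOn ℝ Set.univ U)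
    (sstar : EuclideanSpace ℝ (Fin n)) (Ustar : ℝ)
    (hUstar : U sstar = Ustar)
    (s : ℝ → EuclideanSpace ℝ (Fin n))
    (hs : ∀ t ∈ Set.Ioi (0 : ℝ), DifferentiableAt ℝ s t)
    (hs' : ∀ t ∈ Set.Ioi (0 : ℝ), DifferentiableAt ℝ (deriv s) t)
    (hode : ∀ t ∈ Set.Ioi (0 : ℝ),
      deriv (deriv s) t + (3 / t) • deriv s t + gradient U (s t) = 0) :
    ∀ t > (0 : ℝ), ∀ t₀, 0 < t₀ → t₀ ≤ t →
      U (s t) - Ustar ≤ 2 * ‖s t₀ + (t₀ / 2) • deriv s t₀ - sstar‖ ^ 2 / t ^ 2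
        + (t₀ ^ 2 / t ^ 2) * (U (s t₀) - Ustar) := by
  subst hUstar
  intro t ht t₀ ht₀ ht₀t
  have hanti := nesterovEnergy_antitoneOn hUconv (hU.differentiable one_ne_zero) hs hs' hode sstar
  have hbound : t ^ 2 * (U (s t) - U sstar) ≤ nesterovEnergy U sstar s t₀ :=
    calc t ^ 2 * (U (s t) - U sstar) ≤ nesterovEnergy U sstar s t :=
          le_add_of_nonneg_right (by positivity)
      _ ≤ nesterovEnergy U sstar s t₀ := hanti ht₀ ht ht₀t
  calc U (s t) - U sstar ≤ nesterovEnergy U sstar s t₀ / t ^ 2 := by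
        rw [le_div_iff₀ (by positivity)]
        linarith
    _ = _ := by
        rw [nesterovEnergy]
        ring

theorem stmt_6 (n : ℕ) (U : EuclideanSpace ℝ (Fin n) → ℝ)
    (hU : ContDiff ℝ 1 U) (hUconv : ConvexOn ℝ Set.univ U)
    (sstar : EuclideanSpace ℝ (Fin n)) (Ustar : ℝ)
    (hUstar : U sstar = Ustar) (hmin : ∀ x, Ustar ≤ U x)
    (s : ℝ → EuclideanSpace ℝ (Fin n))
    (hs : ∀ t ∈ Set.Ioi (0 : ℝ), DifferentiableAt ℝ s t)
    (hs' : ∀ t ∈ Set.Ioi (0 : ℝ), DifferentiableAt ℝ (deriv s) t)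
    (hode : ∀ t ∈ Set.Ioi (0 : ℝ),
      deriv (deriv s) t + (3 / t) • deriv s t + gradient U (s t) = 0) :
    ∀ t > (0 : ℝ), ∀ t₀, 0 < t₀ → t₀ ≤ t →
      U (s t) - Ustar ≤ 2 * ‖s t₀ + (t₀ / 2) • deriv s t₀ - sstar‖ ^ 2 / t ^ 2
        + (t₀ ^ 2 / t ^ 2) * (U (s t₀) - Ustar) :=
  stmt_6_general n U hU hUconv sstar Ustar hUstar s hs hs' hode
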